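/- For all convex bodies K, L ⊂ [0,1]² and every N ∈ ℕ₀, the Euclidean distance of the geometric moment vectors is controlled by the Nikodym distance: (∑_{i,j=0}^N (μ_{ij}(K) − μ_{ij}(L))²)^{1/2} ≤ (1 + (1/2)·ln(2N+1)) · δ_N(K,L)^{1/2}. -/

import Mathlib

open MeasureTheory Real

/-- The closed unit square `[0,1]² ⊆ ℝ²`. -/
def unitSq : Set (ℝ × ℝ) := Set.Icc (0, 0) (1, 1)

/-- A convex body in `ℝ²`: a compact convex set with nonempty interior. -/
def IsConvexBody (K : Set (ℝ × ℝ)) : Prop :=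
  IsCompact K ∧ Convex ℝ K ∧ (interior K).Nonempty

/-- The geometric moment `μ_{ij}(K) = ∫_K x₁^i x₂^j dx` of a set `K ⊆ ℝ²`. -/
noncomputable def geomMoment (i j : ℕ) (K : Set (ℝ × ℝ)) : ℝ :=
  ∫ x in K, x.1 ^ i * x.2 ^ j

/-- The Nikodym distance: the area of the symmetric difference. -/
noncomputable def nikodymDist (K L : Set (ℝ × ℝ)) : ℝ :=
  (volume ((K \ L) ∪ (L \ K))).toReal

/-! Put `f = x₁^i x₂^j`. Splitting `K` and `L` along `K ∩ L` gives
`|μ_{ij}(K) - μ_{ij}(L)| ≤ ∫_{K Δ L} |f|`, so by Cauchy–Schwarz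
`(μ_{ij}(K) - μ_{ij}(L))² ≤ δ_N(K,L) ∫_{K Δ L} f² ≤ δ_N(K,L) / ((2i+1)(2j+1))`, the last integral
being taken over all of `[0,1]²`. Summing over `i, j ≤ N` bounds the squared moment distance by
`δ_N(K,L) (∑_{i ≤ N} 1/(2i+1))²`, and comparing with `log` gives
`∑_{i ≤ N} 1/(2i+1) ≤ 1 + ½ log(2N+1)`. -/

section SetIntegral

variable {α : Type*} [MeasurableSpace α] {μ : Measure α}

lemma sq_setIntegral_le_measureReal_mul_setIntegral_sq {s : Set α} (hs : μ s ≠ ⊤) {f : α → ℝ}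
    (hf : IntegrableOn f s μ) (hf2 : IntegrableOn (fun x => f x ^ 2) s μ) :
    (∫ x in s, f x ∂μ) ^ 2 ≤ μ.real s * ∫ x in s, f x ^ 2 ∂μ := by
  rcases eq_or_ne (μ s) 0 with h0 | h0
  · simp [Measure.restrict_eq_zero.mpr h0]
  have hm : 0 < μ.real s := ENNReal.toReal_pos h0 hs
  have hjensen := even_two.convexOn_pow.map_set_average_le (continuousOn_pow 2) isClosed_univ h0
    hs (by simp) hf hf2
  rw [setAverage_eq, setAverage_eq, smul_eq_mul, smul_eq_mul, mul_pow, inv_pow,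
    inv_mul_le_iff₀ (by positivity)] at hjensen
  calc (∫ x in s, f x ∂μ) ^ 2 ≤ μ.real s ^ 2 * ((μ.real s)⁻¹ * ∫ x in s, f x ^ 2 ∂μ) := hjensen
    _ = μ.real s * ∫ x in s, f x ^ 2 ∂μ := by field_simp

lemma setIntegral_sub_setIntegral_eq {K L : Set α} (hK : MeasurableSet K) (hL : MeasurableSet L)
    {f : α → ℝ} (hf : IntegrableOn f (K ∪ L) μ) :
    ∫ x in K, f x ∂μ - ∫ x in L, f x ∂μ = ∫ x in K \ L, f x ∂μ - ∫ x in L \ K, f x ∂μ := by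
  have hKsplit := integral_inter_add_sdiff hL (hf.mono_set Set.subset_union_left)
  have hLsplit := integral_inter_add_sdiff hK (hf.mono_set Set.subset_union_right)
  rw [Set.inter_comm] at hLsplit
  linarith

lemma abs_setIntegral_sub_setIntegral_le {K L : Set α} (hK : MeasurableSet K)
    (hL : MeasurableSet L) {f : α → ℝ} (hf : IntegrableOn f (K ∪ L) μ) :
    |∫ x in K, f x ∂μ - ∫ x in L, f x ∂μ| ≤ ∫ x in (K \ L) ∪ (L \ K), |f x| ∂μ := by
  have hKL : IntegrableOn f (K \ L) μ := hf.mono_set (Set.sdiff_subset.trans Set.subset_union_left)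
  have hLK : IntegrableOn f (L \ K) μ := hf.mono_set (Set.sdiff_subset.trans Set.subset_union_right)
  rw [setIntegral_sub_setIntegral_eq hK hL hf,
    setIntegral_union disjoint_sdiff_sdiff (hL.diff hK) hKL.abs hLK.abs]
  exact (abs_sub _ _).trans (add_le_add abs_integral_le_integral_abs abs_integral_le_integral_abs)

lemma sq_setIntegral_sub_setIntegral_le {K L : Set α} (hK : MeasurableSet K)
    (hL : MeasurableSet L) (hKL : μ (K ∪ L) ≠ ⊤) {f : α → ℝ} (hf : IntegrableOn f (K ∪ L) μ)
    (hf2 : IntegrableOn (fun x => f x ^ 2) (K ∪ L) μ) :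
    (∫ x in K, f x ∂μ - ∫ x in L, f x ∂μ) ^ 2 ≤
      μ.real ((K \ L) ∪ (L \ K)) * ∫ x in (K \ L) ∪ (L \ K), f x ^ 2 ∂μ := by
  have hsub : (K \ L) ∪ (L \ K) ⊆ K ∪ L := Set.union_subset_union Set.sdiff_subset Set.sdiff_subset
  calc (∫ x in K, f x ∂μ - ∫ x in L, f x ∂μ) ^ 2
      ≤ (∫ x in (K \ L) ∪ (L \ K), |f x| ∂μ) ^ 2 := by
        rw [← sq_abs]
        exact pow_le_pow_left₀ (abs_nonneg _) (abs_setIntegral_sub_setIntegral_le hK hL hf) 2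
    _ ≤ μ.real ((K \ L) ∪ (L \ K)) * ∫ x in (K \ L) ∪ (L \ K), |f x| ^ 2 ∂μ :=
        sq_setIntegral_le_measureReal_mul_setIntegral_sq (measure_ne_top_of_subset hsub hKL)
          (hf.mono_set hsub).abs (by simpa only [sq_abs] using hf2.mono_set hsub)
    _ = μ.real ((K \ L) ∪ (L \ K)) * ∫ x in (K \ L) ∪ (L \ K), f x ^ 2 ∂μ := by
        simp only [sq_abs]

end SetIntegral

lemma sum_range_inv_two_mul_add_one_le (N : ℕ) :
    ∑ i ∈ Finset.range (N + 1), (2 * (i : ℝ) + 1)⁻¹ ≤ 1 + (1 / 2) * log (2 * (N : ℝ) + 1) := by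
  induction N with
  | zero => simp
  | succ n ih =>
    have hpos : (0 : ℝ) < 2 * n + 1 := by positivity
    have hlog := one_sub_inv_le_log_of_pos (div_pos (by positivity : (0 : ℝ) < 2 * n + 3) hpos)
    rw [log_div (by positivity) hpos.ne', inv_div] at hlog
    have hstep : (2 * (n : ℝ) + 3)⁻¹ ≤ (1 / 2) * (log (2 * n + 3) - log (2 * n + 1)) := by
      have hgap : 1 - (2 * (n : ℝ) + 1) / (2 * n + 3) = 2 * (2 * (n : ℝ) + 3)⁻¹ := by
        field_simp; ring
      linarith
    rw [Finset.sum_range_succ, Nat.cast_succ, show 2 * ((n : ℝ) + 1) + 1 = 2 * n + 3 by ring]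
    linarith

lemma unitSq_eq_Icc_prod_Icc : unitSq = Set.Icc (0 : ℝ) 1 ×ˢ Set.Icc (0 : ℝ) 1 := by
  rw [unitSq, Set.Icc_prod_Icc]

lemma isCompact_unitSq : IsCompact unitSq := by
  rw [unitSq_eq_Icc_prod_Icc]
  exact isCompact_Icc.prod isCompact_Icc

lemma Continuous.integrableOn_unitSq {f : ℝ × ℝ → ℝ} (hf : Continuous f) :
    IntegrableOn f unitSq :=
  hf.continuousOn.integrableOn_compact isCompact_unitSq

lemma setIntegral_unitSq_monomial (i j : ℕ) :
    ∫ x in unitSq, x.1 ^ i * x.2 ^ j = ((i : ℝ) + 1)⁻¹ * ((j : ℝ) + 1)⁻¹ := by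
  have hIcc (n : ℕ) : ∫ x in Set.Icc (0 : ℝ) 1, x ^ n = ((n : ℝ) + 1)⁻¹ := by
    rw [integral_Icc_eq_integral_Ioc, ← intervalIntegral.integral_of_le zero_le_one, integral_pow]
    simp
  rw [unitSq_eq_Icc_prod_Icc, Measure.volume_eq_prod,
    setIntegral_prod_mul (fun x : ℝ => x ^ i) (fun x : ℝ => x ^ j), hIcc, hIcc]

lemma setIntegral_sq_monomial_le {S : Set (ℝ × ℝ)} (hS : S ⊆ unitSq) (i j : ℕ) :
    ∫ x in S, (x.1 ^ i * x.2 ^ j) ^ 2 ≤ (2 * (i : ℝ) + 1)⁻¹ * (2 * (j : ℝ) + 1)⁻¹ := by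
  have hsq (x : ℝ × ℝ) : (x.1 ^ i * x.2 ^ j) ^ 2 = x.1 ^ (2 * i) * x.2 ^ (2 * j) := by ring
  simp_rw [hsq]
  calc ∫ x in S, x.1 ^ (2 * i) * x.2 ^ (2 * j)
      ≤ ∫ x in unitSq, x.1 ^ (2 * i) * x.2 ^ (2 * j) :=
        setIntegral_mono_set (by fun_prop : Continuous _).integrableOn_unitSq
          (Filter.Eventually.of_forall fun x =>
            mul_nonneg ((even_two_mul i).pow_nonneg _) ((even_two_mul j).pow_nonneg _))
          hS.eventuallyLE
    _ = (2 * (i : ℝ) + 1)⁻¹ * (2 * (j : ℝ) + 1)⁻¹ := by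
        rw [setIntegral_unitSq_monomial]
        push_cast
        ring

lemma sq_geomMoment_sub_le {K L : Set (ℝ × ℝ)} (hK : MeasurableSet K) (hKs : K ⊆ unitSq)
    (hL : MeasurableSet L) (hLs : L ⊆ unitSq) (i j : ℕ) :
    (geomMoment i j K - geomMoment i j L) ^ 2 ≤
      nikodymDist K L * ((2 * (i : ℝ) + 1)⁻¹ * (2 * (j : ℝ) + 1)⁻¹) := by
  have hKLs : K ∪ L ⊆ unitSq := Set.union_subset hKs hLs
  have hΔs : (K \ L) ∪ (L \ K) ⊆ unitSq :=
    (Set.union_subset_union Set.sdiff_subset Set.sdiff_subset).trans hKLs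
  exact (sq_setIntegral_sub_setIntegral_le hK hL
    (measure_ne_top_of_subset hKLs isCompact_unitSq.measure_lt_top.ne)
    ((by fun_prop : Continuous _).integrableOn_unitSq.mono_set hKLs)
    ((by fun_prop : Continuous _).integrableOn_unitSq.mono_set hKLs)).trans
    (mul_le_mul_of_nonneg_left (setIntegral_sq_monomial_le hΔs i j) measureReal_nonneg)

/-- The Euclidean distance of the geometric moment vectors is controlled by
the Nikodym distance:
`(∑_{i,j=0}^N (μ_{ij}(K) - μ_{ij}(L))²)^{1/2} ≤ (1 + (1/2)ln(2N+1)) δ_N(K,L)^{1/2}`. -/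
theorem moment_distance_le_nikodym (K L : Set (ℝ × ℝ))
    (hK : IsConvexBody K) (hKs : K ⊆ unitSq) (hL : IsConvexBody L) (hLs : L ⊆ unitSq)
    (N : ℕ) :
    Real.sqrt (∑ i ∈ Finset.range (N + 1), ∑ j ∈ Finset.range (N + 1),
        (geomMoment i j K - geomMoment i j L) ^ 2) ≤
      (1 + (1 / 2) * Real.log (2 * (N : ℝ) + 1)) * Real.sqrt (nikodymDist K L) := by
  set S := ∑ i ∈ Finset.range (N + 1), (2 * (i : ℝ) + 1)⁻¹
  have hterm := sq_geomMoment_sub_le hK.1.isClosed.measurableSet hKs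
    hL.1.isClosed.measurableSet hLs
  have hsum : ∑ i ∈ Finset.range (N + 1), ∑ j ∈ Finset.range (N + 1),
      (geomMoment i j K - geomMoment i j L) ^ 2 ≤ S ^ 2 * nikodymDist K L := by
    calc _ ≤ ∑ i ∈ Finset.range (N + 1), ∑ j ∈ Finset.range (N + 1),
          nikodymDist K L * ((2 * (i : ℝ) + 1)⁻¹ * (2 * (j : ℝ) + 1)⁻¹) :=
          Finset.sum_le_sum fun i _ => Finset.sum_le_sum fun j _ => hterm i j
      _ = S ^ 2 * nikodymDist K L := by
          rw [sq, Finset.sum_mul_sum, Finset.sum_mul]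
          simp_rw [Finset.sum_mul]
          exact Finset.sum_congr rfl fun i _ => Finset.sum_congr rfl fun j _ => by ring
  calc Real.sqrt (∑ i ∈ Finset.range (N + 1), ∑ j ∈ Finset.range (N + 1),
        (geomMoment i j K - geomMoment i j L) ^ 2)
      ≤ S * Real.sqrt (nikodymDist K L) := by
        refine (Real.sqrt_le_sqrt hsum).trans_eq ?_
        rw [Real.sqrt_mul (sq_nonneg S), Real.sqrt_sq (by positivity)]
    _ ≤ _ := mul_le_mul_of_nonneg_right (sum_range_inv_two_mul_add_one_le N) (sqrt_nonneg _)
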